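/- Let d₁, d₂ ≥ 1 be integers, d = d₁ + d₂, and let v : ℤ^{d₂} → ℝ be an arbitrary function. Then for every E ∈ [−d, d] and every ε > 0 there exists a finitely supported Ψ : ℤ^d → ℂ with ∑_{x∈ℤ^d} |Ψ(x)|² = 1, Ψ((0,x₂)) = 0 for all x₂ ∈ ℤ^{d₂}, and ∑_{x∈ℤ^d} | −(1/2)∑_{|y−x|=1} Ψ(y) + δ(x₁) v(x₂) Ψ(x) − E Ψ(x) |² < ε². (This is the Weyl-sequence form of the statement that the spectrum of the surface Schrödinger operator H₀ + V contains [−d, d] for every surface potential v.) -/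

import Mathlib

open Complex

/-- The discrete Laplacian part: `(H₀Ψ)(x) = -(1/2) ∑_{|x-y|=1} Ψ(y)` on `ℤ^{d₁} × ℤ^{d₂}`. -/
noncomputable def lapSum (d₁ d₂ : ℕ) (Ψ : (Fin d₁ → ℤ) × (Fin d₂ → ℤ) → ℂ)
    (x : (Fin d₁ → ℤ) × (Fin d₂ → ℤ)) : ℂ :=
  -(1/2) * ((∑ i : Fin d₁, (Ψ (Function.update x.1 i (x.1 i + 1), x.2)
      + Ψ (Function.update x.1 i (x.1 i - 1), x.2)))
    + ∑ j : Fin d₂, (Ψ (x.1, Function.update x.2 j (x.2 j + 1))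
      + Ψ (x.1, Function.update x.2 j (x.2 j - 1))))

/-!
The plane wave `z ↦ exp (iθ (z₁ + ⋯ + z_d))` solves `H₀ Ψ = -d cos θ Ψ`, and `-d cos θ` sweeps out
`[-d, d]`. Cut off to the cube `[1, L]^d` it is a product of one-dimensional cut-off waves, so the
eigenvalue equation still holds except on a boundary layer of `(L + 2)^d - (L - 2)^d = O(L^(d-1))`
sites, where the error is bounded. After normalising by `L^(-d/2)` the squared residual is
`O(1/L)`. The cube avoids the surface `x₁ = 0`, so the surface potential never acts on `Ψ`.
-/

open Finset Function

section LatticeLaplacian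

variable {ι : Type*} [Fintype ι] [DecidableEq ι]

noncomputable def latticeLaplacian (Φ : (ι → ℤ) → ℂ) (z : ι → ℤ) : ℂ :=
  -(1 / 2) * ∑ k, (Φ (update z k (z k + 1)) + Φ (update z k (z k - 1)))

theorem lapSum_comp_sumArrowEquivProdArrow_symm {d₁ d₂ : ℕ}
    (Φ : (Fin d₁ ⊕ Fin d₂ → ℤ) → ℂ) (x : (Fin d₁ → ℤ) × (Fin d₂ → ℤ)) :
    lapSum d₁ d₂ (Φ ∘ (Equiv.sumArrowEquivProdArrow _ _ _).symm) x
      = latticeLaplacian Φ ((Equiv.sumArrowEquivProdArrow _ _ _).symm x) := by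
  obtain ⟨a, b⟩ := x
  change lapSum d₁ d₂ (fun y => Φ (Sum.elim y.1 y.2)) (a, b) = latticeLaplacian Φ (Sum.elim a b)
  simp only [lapSum, latticeLaplacian, Fintype.sum_sum_type, Sum.elim_inl, Sum.elim_inr,
    Sum.elim_update_left, Sum.elim_update_right, mul_add]

theorem latticeLaplacian_const_mul (c : ℂ) (Φ : (ι → ℤ) → ℂ) (z : ι → ℤ) :
    latticeLaplacian (fun y => c * Φ y) z = c * latticeLaplacian Φ z := by
  simp only [latticeLaplacian, ← mul_add, ← mul_sum]
  ring

theorem norm_latticeLaplacian_le {Φ : (ι → ℤ) → ℂ} {C : ℝ} (hΦ : ∀ y, ‖Φ y‖ ≤ C)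
    (z : ι → ℤ) : ‖latticeLaplacian Φ z‖ ≤ Fintype.card ι * C := by
  have hpair : ∀ k, ‖Φ (update z k (z k + 1)) + Φ (update z k (z k - 1))‖ ≤ 2 * C :=
    fun k => (norm_add_le _ _).trans <| by
      linarith [hΦ (update z k (z k + 1)), hΦ (update z k (z k - 1))]
  calc ‖latticeLaplacian Φ z‖
      = 1 / 2 * ‖∑ k, (Φ (update z k (z k + 1)) + Φ (update z k (z k - 1)))‖ := by
        simp [latticeLaplacian]
    _ ≤ 1 / 2 * (Fintype.card ι * (2 * C)) := by
        gcongr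
        simpa using norm_sum_le_of_le univ fun k _ => hpair k
    _ = Fintype.card ι * C := by ring

theorem prod_update_eq_mul_prod_erase {M : Type*} [CommMonoid M] (φ : ℤ → M) (z : ι → ℤ)
    (k : ι) (t : ℤ) : ∏ j, φ (update z k t j) = φ t * ∏ j ∈ univ.erase k, φ (z j) := by
  rw [← mul_prod_erase univ _ (mem_univ k), update_self]
  congr 1
  exact prod_congr rfl fun j hj => by rw [update_of_ne (ne_of_mem_erase hj)]

/-- Separation of variables: on a product `∏ φ (z k)` the operator acts one coordinate at a
time. -/
theorem latticeLaplacian_prod_add_mul (φ : ℤ → ℂ) (μ : ℂ) (z : ι → ℤ) :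
    latticeLaplacian (fun y => ∏ k, φ (y k)) z + Fintype.card ι * μ * ∏ k, φ (z k)
      = -(1 / 2) * ∑ k, (φ (z k + 1) + φ (z k - 1) - 2 * μ * φ (z k))
          * ∏ j ∈ univ.erase k, φ (z j) := by
  have hprod : ∀ k, ∏ j, φ (z j) = φ (z k) * ∏ j ∈ univ.erase k, φ (z j) :=
    fun k => (mul_prod_erase univ _ (mem_univ k)).symm
  have hdiag : ∑ k, 2 * μ * φ (z k) * ∏ j ∈ univ.erase k, φ (z j)
      = Fintype.card ι * (2 * μ * ∏ k, φ (z k)) := by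
    simp only [mul_assoc, ← hprod, sum_const, card_univ, nsmul_eq_mul]
  simp only [latticeLaplacian, prod_update_eq_mul_prod_erase, ← add_mul, sub_mul,
    sum_sub_distrib, hdiag]
  ring

end LatticeLaplacian

section CutoffPlaneWave

noncomputable def cutoffWave (θ : ℝ) (L : ℤ) : ℤ → ℂ :=
  (Set.Icc 1 L).indicator fun s => exp ((θ * s : ℝ) * I)

theorem exp_add_exp_eq_two_cos_mul (θ : ℝ) (s : ℤ) :
    exp ((θ * (s + 1 : ℤ) : ℝ) * I) + exp ((θ * (s - 1 : ℤ) : ℝ) * I)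
      = 2 * cos θ * exp ((θ * s : ℝ) * I) := by
  rw [two_cos, add_mul, ← exp_add, ← exp_add]
  push_cast
  ring_nf

variable {θ : ℝ} {L : ℤ}

theorem cutoffWave_add_cutoffWave {s : ℤ}
    (hs : s ∈ Set.Icc 2 (L - 1) ∨ s ∉ Set.Icc 0 (L + 1)) :
    cutoffWave θ L (s + 1) + cutoffWave θ L (s - 1) = 2 * cos θ * cutoffWave θ L s := by
  rcases hs with ⟨hs₁, hs₂⟩ | hs
  · have hin : ∀ t, |t - s| ≤ 1 → t ∈ Set.Icc 1 L := fun t ht => by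
      rw [abs_le] at ht
      constructor <;> omega
    rw [cutoffWave, Set.indicator_of_mem (hin _ (by simp)),
      Set.indicator_of_mem (hin _ (by simp)), Set.indicator_of_mem (hin _ (by simp)),
      exp_add_exp_eq_two_cos_mul]
  · have hout : ∀ t, |t - s| ≤ 1 → t ∉ Set.Icc 1 L := fun t ht ht' => by
      simp only [Set.mem_Icc, abs_le] at *
      omega
    rw [cutoffWave, Set.indicator_of_notMem (hout _ (by simp)),
      Set.indicator_of_notMem (hout _ (by simp)), Set.indicator_of_notMem (hout _ (by simp))]
    ring

theorem norm_cutoffWave_le_one (s : ℤ) : ‖cutoffWave θ L s‖ ≤ 1 := by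
  unfold cutoffWave
  by_cases hs : s ∈ Set.Icc 1 L
  · rw [Set.indicator_of_mem hs, norm_exp_ofReal_mul_I]
  · simp [Set.indicator_of_notMem hs]

end CutoffPlaneWave

section ProductWave

variable {ι : Type*} [Fintype ι]

noncomputable def productWave (θ : ℝ) (L : ℤ) (z : ι → ℤ) : ℂ := ∏ k, cutoffWave θ L (z k)

theorem norm_productWave_le_one (θ : ℝ) (L : ℤ) (z : ι → ℤ) : ‖productWave θ L z‖ ≤ 1 := by
  rw [productWave, norm_prod]
  exact prod_le_one (fun _ _ => norm_nonneg _) fun k _ => norm_cutoffWave_le_one _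

variable [DecidableEq ι]

noncomputable def cube (a b : ℤ) : Finset (ι → ℤ) :=
  Fintype.piFinset fun _ => Finset.Icc a b

theorem mem_cube {a b : ℤ} {z : ι → ℤ} : z ∈ cube a b ↔ ∀ k, z k ∈ Set.Icc a b := by
  simp [cube]

theorem card_cube (a b : ℤ) :
    #(cube a b : Finset (ι → ℤ)) = (b + 1 - a).toNat ^ Fintype.card ι := by
  simp [cube]

variable {θ : ℝ} {L : ℤ} {z : ι → ℤ}

theorem productWave_eq_zero_of_notMem_cube (hz : z ∉ cube 1 L) : productWave θ L z = 0 := by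
  obtain ⟨k, hk⟩ := not_forall.1 (mt mem_cube.2 hz)
  exact prod_eq_zero (mem_univ k) (Set.indicator_of_notMem hk _)

theorem norm_productWave_of_mem_cube (hz : z ∈ cube 1 L) : ‖productWave θ L z‖ = 1 := by
  rw [productWave, norm_prod]
  refine prod_eq_one fun k _ => ?_
  rw [cutoffWave, Set.indicator_of_mem (mem_cube.1 hz k), norm_exp_ofReal_mul_I]

theorem latticeLaplacian_productWave_add_eq_zero (hz : z ∉ cube 0 (L + 1) \ cube 2 (L - 1)) :
    latticeLaplacian (productWave θ L) z + Fintype.card ι * cos θ * productWave θ L z = 0 := by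
  unfold productWave
  rw [latticeLaplacian_prod_add_mul]
  refine mul_eq_zero_of_right _ (sum_eq_zero fun k _ => ?_)
  rw [mem_sdiff, not_and_not_right] at hz
  by_cases hout : z ∈ cube 0 (L + 1)
  · rw [cutoffWave_add_cutoffWave (Or.inl (mem_cube.1 (hz hout) k)), sub_self, zero_mul]
  · -- Some coordinate `z k₀` is far out: direction `k₀` has no residual, and every other
    -- direction carries the factor `cutoffWave θ L (z k₀) = 0`.
    obtain ⟨k₀, hk₀⟩ := not_forall.1 (mt mem_cube.2 hout)
    rcases eq_or_ne k k₀ with rfl | hne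
    · rw [cutoffWave_add_cutoffWave (Or.inr hk₀), sub_self, zero_mul]
    · refine mul_eq_zero_of_right _ (prod_eq_zero (mem_erase.2 ⟨hne.symm, mem_univ k₀⟩) ?_)
      exact Set.indicator_of_notMem (fun h => hk₀ ⟨by linarith [h.1], by linarith [h.2]⟩) _

end ProductWave

section WeylSequence

open Filter Topology

variable {ι : Type*} [Fintype ι] [DecidableEq ι]

theorem cube_subset_cube {a b a' b' : ℤ} (ha : a' ≤ a) (hb : b ≤ b') :
    (cube a b : Finset (ι → ℤ)) ⊆ cube a' b' := fun _ hz =>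
  mem_cube.2 fun k => Set.Icc_subset_Icc ha hb (mem_cube.1 hz k)

theorem card_cube_sdiff_cube {L : ℕ} (hL : 2 ≤ L) :
    (#((cube 0 (L + 1) : Finset (ι → ℤ)) \ cube 2 (L - 1)) : ℝ)
      = ((L : ℝ) + 2) ^ Fintype.card ι - ((L : ℝ) - 2) ^ Fintype.card ι := by
  rw [card_sdiff_of_subset (cube_subset_cube (by norm_num) (by omega)), card_cube, card_cube,
    show ((L : ℤ) + 1 + 1 - 0).toNat = L + 2 by omega,
    show ((L : ℤ) - 1 + 1 - 2).toNat = L - 2 by omega,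
    Nat.cast_sub (Nat.pow_le_pow_left (by omega) _)]
  push_cast [Nat.cast_sub hL]
  ring

theorem tendsto_sub_pow_div_pow (n : ℕ) :
    Tendsto (fun L : ℕ => (((L : ℝ) + 2) ^ n - ((L : ℝ) - 2) ^ n) / (L : ℝ) ^ n) atTop (𝓝 0) := by
  have h := ((tendsto_const_div_atTop_nhds_zero_nat (2 : ℝ)).const_add 1).pow n |>.sub
    (((tendsto_const_div_atTop_nhds_zero_nat (2 : ℝ)).const_sub 1).pow n)
  rw [add_zero, sub_zero, sub_self] at h
  refine h.congr' ((eventually_ne_atTop 0).mono fun L hL => ?_)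
  have hL' : (L : ℝ) ≠ 0 := Nat.cast_ne_zero.2 hL
  dsimp only
  rw [show 1 + 2 / (L : ℝ) = (L + 2) / L by field_simp,
    show 1 - 2 / (L : ℝ) = (L - 2) / L by field_simp, div_pow, div_pow, sub_div]

variable {θ : ℝ}

theorem tsum_norm_productWave_sq (L : ℕ) :
    ∑' z : ι → ℤ, ‖productWave θ L z‖ ^ 2 = (L : ℝ) ^ Fintype.card ι := by
  rw [tsum_eq_sum (s := cube 1 L) fun z hz => by
      rw [productWave_eq_zero_of_notMem_cube hz, norm_zero, zero_pow two_ne_zero],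
    sum_congr rfl fun z hz => by rw [norm_productWave_of_mem_cube hz, one_pow],
    sum_const, card_cube, nsmul_one, show ((L : ℤ) + 1 - 1).toNat = L by omega]
  push_cast
  rfl

theorem norm_latticeLaplacian_productWave_add_le (L : ℤ) (z : ι → ℤ) :
    ‖latticeLaplacian (productWave θ L) z + Fintype.card ι * cos θ * productWave θ L z‖
      ≤ 2 * Fintype.card ι := by
  have hlap := norm_latticeLaplacian_le (norm_productWave_le_one θ L) z
  have hcos : ‖(cos θ : ℂ)‖ ≤ 1 := by
    rw [← ofReal_cos, norm_real, Real.norm_eq_abs]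
    exact Real.abs_cos_le_one θ
  have hdiag : ‖Fintype.card ι * cos θ * productWave θ L z‖ ≤ Fintype.card ι := by
    rw [norm_mul, norm_mul, norm_natCast]
    calc _ ≤ (Fintype.card ι : ℝ) * 1 * 1 := by
          gcongr
          exact norm_productWave_le_one θ L z
      _ = _ := by ring
  linarith [norm_add_le (latticeLaplacian (productWave θ L) z)
    (Fintype.card ι * cos θ * productWave θ L z)]

theorem tsum_norm_latticeLaplacian_productWave_add_sq_le {L : ℕ} (hL : 2 ≤ L) :
    ∑' z : ι → ℤ, ‖latticeLaplacian (productWave θ L) z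
        + Fintype.card ι * cos θ * productWave θ L z‖ ^ 2
      ≤ 4 * Fintype.card ι ^ 2
          * (((L : ℝ) + 2) ^ Fintype.card ι - ((L : ℝ) - 2) ^ Fintype.card ι) := by
  rw [tsum_eq_sum (s := cube 0 (L + 1) \ cube 2 (L - 1)) fun z hz => by
      rw [latticeLaplacian_productWave_add_eq_zero hz, norm_zero, zero_pow two_ne_zero],
    ← card_cube_sdiff_cube hL]
  calc _ ≤ ∑ z ∈ cube 0 (L + 1) \ cube 2 (L - 1), (2 * (Fintype.card ι : ℝ)) ^ 2 :=
        sum_le_sum fun z _ => pow_le_pow_left₀ (norm_nonneg _)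
          (norm_latticeLaplacian_productWave_add_le _ z) 2
    _ = _ := by rw [sum_const, nsmul_eq_mul]; ring

theorem exists_weyl_sequence_latticeLaplacian (θ : ℝ) {ε : ℝ} (hε : 0 < ε) :
    ∃ Ψ : (ι → ℤ) → ℂ, (support Ψ).Finite ∧ ∑' z, ‖Ψ z‖ ^ 2 = 1 ∧
      (∀ z k, z k ≤ 0 → Ψ z = 0) ∧
      ∑' z, ‖latticeLaplacian Ψ z + Fintype.card ι * cos θ * Ψ z‖ ^ 2 < ε ^ 2 := by
  set n := Fintype.card ι
  have hsmall := ((tendsto_sub_pow_div_pow n).const_mul (4 * (n : ℝ) ^ 2)).eventually_lt_const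
    (show 4 * (n : ℝ) ^ 2 * 0 < ε ^ 2 by rw [mul_zero]; positivity)
  obtain ⟨L, hLε, hL⟩ := (hsmall.and (eventually_ge_atTop 2)).exists
  have hLn : (0 : ℝ) < (L : ℝ) ^ n := pow_pos (by exact_mod_cast (by omega : 0 < L)) n
  set c : ℝ := √((L : ℝ) ^ n)⁻¹
  have hc : c ^ 2 = ((L : ℝ) ^ n)⁻¹ := Real.sq_sqrt (inv_nonneg.2 hLn.le)
  have hscale : ∀ f : (ι → ℤ) → ℂ, ∑' z, ‖(c : ℂ) * f z‖ ^ 2 = c ^ 2 * ∑' z, ‖f z‖ ^ 2 :=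
    fun f => by simp_rw [norm_mul, mul_pow, norm_real, Real.norm_eq_abs, sq_abs, tsum_mul_left]
  refine ⟨fun z => c * productWave θ L z, ?_, ?_, ?_, ?_⟩
  · refine (cube 1 L).finite_toSet.subset fun z hz => ?_
    by_contra hout
    exact hz (by simp only [productWave_eq_zero_of_notMem_cube hout, mul_zero])
  · rw [hscale, hc, tsum_norm_productWave_sq, inv_mul_cancel₀ hLn.ne']
  · intro z k hk
    have hout : z ∉ cube 1 (L : ℤ) := fun h => by linarith [(mem_cube.1 h k).1]
    simp only [productWave_eq_zero_of_notMem_cube hout, mul_zero]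
  · have hfactor : ∀ z : ι → ℤ, latticeLaplacian (fun y => c * productWave θ L y) z
          + n * cos θ * (c * productWave θ L z)
        = c * (latticeLaplacian (productWave θ L) z + n * cos θ * productWave θ L z) := by
      intro z
      rw [latticeLaplacian_const_mul]
      ring
    simp only [hfactor, hscale, hc]
    calc _ ≤ ((L : ℝ) ^ n)⁻¹ * (4 * n ^ 2 * (((L : ℝ) + 2) ^ n - ((L : ℝ) - 2) ^ n)) :=
          mul_le_mul_of_nonneg_left (tsum_norm_latticeLaplacian_productWave_add_sq_le hL)
            (inv_nonneg.2 hLn.le)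
      _ = 4 * n ^ 2 * ((((L : ℝ) + 2) ^ n - ((L : ℝ) - 2) ^ n) / (L : ℝ) ^ n) := by ring
      _ < ε ^ 2 := hLε

end WeylSequence

theorem exists_eq_neg_mul_cos {d E : ℝ} (hd : 0 < d) (hE : E ∈ Set.Icc (-d) d) :
    ∃ θ : ℝ, E = -d * Real.cos θ := by
  refine ⟨Real.arccos (-(E / d)), ?_⟩
  rw [Real.cos_arccos (by rw [neg_le_neg_iff, div_le_one hd]; exact hE.2)
    (by rw [neg_le, le_div_iff₀ hd]; linarith [hE.1])]
  field_simp

theorem weyl_sequence_for_surface_operator_general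
    (d₁ d₂ : ℕ) (hd₁ : 1 ≤ d₁)
    (v : (Fin d₂ → ℤ) → ℝ)
    (E : ℝ) (hE : E ∈ Set.Icc (-(d₁ + d₂ : ℝ)) (d₁ + d₂ : ℝ))
    (ε : ℝ) (hε : 0 < ε) :
    ∃ Ψ : (Fin d₁ → ℤ) × (Fin d₂ → ℤ) → ℂ,
      (Function.support Ψ).Finite ∧
      (∑' x : (Fin d₁ → ℤ) × (Fin d₂ → ℤ), ‖Ψ x‖ ^ 2) = 1 ∧
      (∀ x₂ : Fin d₂ → ℤ, Ψ (0, x₂) = 0) ∧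
      (∑' x : (Fin d₁ → ℤ) × (Fin d₂ → ℤ),
        ‖lapSum d₁ d₂ Ψ x + (if x.1 = 0 then (v x.2 : ℂ) else 0) * Ψ x - (E : ℂ) * Ψ x‖ ^ 2)
        < ε ^ 2 := by
  obtain ⟨θ, rfl⟩ := exists_eq_neg_mul_cos (by positivity) hE
  obtain ⟨Ψ, hfin, hnorm, hpos, hres⟩ :=
    exists_weyl_sequence_latticeLaplacian (ι := Fin d₁ ⊕ Fin d₂) θ hε
  set e := Equiv.sumArrowEquivProdArrow (Fin d₁) (Fin d₂) ℤ
  have hsurface : ∀ x₂, Ψ (e.symm (0, x₂)) = 0 := fun _ => hpos _ (.inl ⟨0, hd₁⟩) le_rfl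
  have hpotential : ∀ x, lapSum d₁ d₂ (Ψ ∘ e.symm) x
        + (if x.1 = 0 then (v x.2 : ℂ) else 0) * (Ψ ∘ e.symm) x
        - ((-(d₁ + d₂ : ℝ) * Real.cos θ : ℝ) : ℂ) * (Ψ ∘ e.symm) x
      = latticeLaplacian Ψ (e.symm x)
          + Fintype.card (Fin d₁ ⊕ Fin d₂) * cos θ * Ψ (e.symm x) := by
    rintro ⟨x₁, x₂⟩
    rw [lapSum_comp_sumArrowEquivProdArrow_symm]
    change latticeLaplacian Ψ (e.symm (x₁, x₂)) + _ - _ = _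
    simp only [Function.comp_apply, Fintype.card_sum, Fintype.card_fin]
    split_ifs with hx
    · subst hx
      rw [hsurface]
      ring
    · push_cast
      ring
  refine ⟨Ψ ∘ e.symm, ?_, (e.symm.tsum_eq fun z => ‖Ψ z‖ ^ 2).trans hnorm, hsurface, ?_⟩
  · rw [support_comp_eq_preimage]
    exact hfin.preimage e.symm.injective.injOn
  · exact (tsum_congr fun x => congrArg (‖·‖ ^ 2) (hpotential x)).trans_lt
      ((e.symm.tsum_eq _).trans_lt hres)

/-- Weyl-sequence form of `[-d,d] ⊆ σ(H₀ + V)` for an arbitrary surface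
potential `v`: for every `E ∈ [-d,d]` and `ε > 0` there is a finitely supported,
normalized `Ψ` vanishing on the surface `{x₁ = 0}` with `‖(H - E)Ψ‖ < ε`. -/
theorem weyl_sequence_for_surface_operator
    (d₁ d₂ : ℕ) (hd₁ : 1 ≤ d₁) (hd₂ : 1 ≤ d₂)
    (v : (Fin d₂ → ℤ) → ℝ)
    (E : ℝ) (hE : E ∈ Set.Icc (-(d₁ + d₂ : ℝ)) (d₁ + d₂ : ℝ))
    (ε : ℝ) (hε : 0 < ε) :
    ∃ Ψ : (Fin d₁ → ℤ) × (Fin d₂ → ℤ) → ℂ,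
      (Function.support Ψ).Finite ∧
      (∑' x : (Fin d₁ → ℤ) × (Fin d₂ → ℤ), ‖Ψ x‖ ^ 2) = 1 ∧
      (∀ x₂ : Fin d₂ → ℤ, Ψ (0, x₂) = 0) ∧
      (∑' x : (Fin d₁ → ℤ) × (Fin d₂ → ℤ),
        ‖lapSum d₁ d₂ Ψ x + (if x.1 = 0 then (v x.2 : ℂ) else 0) * Ψ x - (E : ℂ) * Ψ x‖ ^ 2)
        < ε ^ 2 :=
  weyl_sequence_for_surface_operator_general d₁ d₂ hd₁ v E hE ε hε
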